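/- Let g : U → F be C¹ with regular value y₀ (so g'(x) is surjective for every x ∈ S = g⁻¹(y₀)) and let f : U → ℝ be C¹. If x ∈ S is a local extremum of f|_S, then the Lagrange multiplier is unique: there is exactly one continuous linear functional L ∈ F* with f'(x) = L ∘ g'(x). Moreover L = f'(x) ∘ g'(x)⁺ for every generalized inverse g'(x)⁺ of g'(x); in particular f'(x) ∘ q₁ = f'(x) ∘ q₂ for any two generalized inverses q₁, q₂ of g'(x). -/

import Mathlib

/-!
The classical multiplier rule gives `(Λ, Λ₀) ≠ 0` with `Λ ∘ g'(x) + Λ₀ f'(x) = 0`. Surjectivity of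
`g'(x)` forces `Λ₀ ≠ 0`, so `f'(x) = L ∘ g'(x)` with `L = -Λ₀⁻¹ Λ`, and `L` is continuous because, by
the open mapping theorem, `g'(x)` is a quotient map. Uniqueness of `L` is right cancellation of the
surjection `g'(x)`. For a generalized inverse `q`, cancelling `g'(x)` on the right in
`g'(x) q g'(x) = g'(x)` gives `g'(x) q = id`, hence `f'(x) q = L g'(x) q = L`.
-/

open Function Topology

theorem IsLocalExtrOn.of_inter_mem_nhds {α β : Type*} [TopologicalSpace α] [Preorder β]
    {f : α → β} {s t : Set α} {a : α} (h : IsLocalExtrOn f (t ∩ s) a) (ht : t ∈ 𝓝 a) :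
    IsLocalExtrOn f s a := by
  rwa [IsLocalExtrOn, nhdsWithin_inter_of_mem (mem_nhdsWithin_of_mem_nhds ht)] at h

namespace ContinuousLinearMap

section Semiring

variable {R M₁ M₂ M₃ : Type*} [Semiring R]
  [TopologicalSpace M₁] [AddCommMonoid M₁] [Module R M₁]
  [TopologicalSpace M₂] [AddCommMonoid M₂] [Module R M₂]
  [TopologicalSpace M₃] [AddCommMonoid M₃] [Module R M₃]

theorem cancel_right {g₁ g₂ : M₂ →L[R] M₃} {f : M₁ →L[R] M₂} (hf : Surjective f)
    (h : g₁ ∘L f = g₂ ∘L f) : g₁ = g₂ :=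
  coe_injective <| LinearMap.ext fun y => by
    obtain ⟨x, rfl⟩ := hf y
    exact congr($h x)

theorem comp_eq_id_of_comp_comp_eq {T : M₁ →L[R] M₂} {q : M₂ →L[R] M₁} (hT : Surjective T)
    (hq : T ∘L q ∘L T = T) : T ∘L q = ContinuousLinearMap.id R M₂ :=
  cancel_right hT hq

theorem comp_eq_of_eq_comp_of_comp_comp_eq {T : M₁ →L[R] M₂} {q : M₂ →L[R] M₁}
    {φ : M₁ →L[R] M₃} {L : M₂ →L[R] M₃} (hT : Surjective T) (hφ : φ = L ∘L T)
    (hq : T ∘L q ∘L T = T) : φ ∘L q = L := by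
  rw [hφ, comp_assoc, comp_eq_id_of_comp_comp_eq hT hq, comp_id]

end Semiring

theorem exists_eq_comp_of_eq_linearMap_comp {𝕜 E F G : Type*} [NontriviallyNormedField 𝕜]
    [NormedAddCommGroup E] [NormedSpace 𝕜 E] [CompleteSpace E]
    [NormedAddCommGroup F] [NormedSpace 𝕜 F] [CompleteSpace F]
    [TopologicalSpace G] [AddCommMonoid G] [Module 𝕜 G]
    {T : E →L[𝕜] F} (hT : Surjective T) {φ : E →L[𝕜] G} {L : F →ₗ[𝕜] G}
    (hφ : (φ : E →ₗ[𝕜] G) = L ∘ₗ (T : E →ₗ[𝕜] F)) : ∃ L' : F →L[𝕜] G, φ = L' ∘L T := by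
  have hL : Continuous L := (T.isQuotientMap hT).continuous_iff.2 <| by
    change Continuous (L ∘ₗ (T : E →ₗ[𝕜] F))
    rw [← hφ]
    exact φ.continuous
  exact ⟨⟨L, hL⟩, coe_injective hφ⟩

end ContinuousLinearMap

theorem IsLocalExtrOn.exists_eq_comp_of_hasStrictFDerivAt_of_surjective
    {E F : Type*} [NormedAddCommGroup E] [NormedSpace ℝ E] [CompleteSpace E]
    [NormedAddCommGroup F] [NormedSpace ℝ F] [CompleteSpace F]
    {f : E → F} {φ : E → ℝ} {x₀ : E} {f' : E →L[ℝ] F} {φ' : StrongDual ℝ E}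
    (hextr : IsLocalExtrOn φ {x | f x = f x₀} x₀) (hf' : HasStrictFDerivAt f f' x₀)
    (hφ' : HasStrictFDerivAt φ φ' x₀) (hsurj : Surjective f') :
    ∃ L : StrongDual ℝ F, φ' = L ∘L f' := by
  obtain ⟨Λ, Λ₀, hne, hΛ⟩ := hextr.exists_linear_map_of_hasStrictFDerivAt hf' hφ'
  have hΛ₀ : Λ₀ ≠ 0 := by
    rintro rfl
    refine hne (Prod.ext (LinearMap.ext fun y => ?_) rfl)
    obtain ⟨x, rfl⟩ := hsurj y
    simpa using hΛ x
  refine ContinuousLinearMap.exists_eq_comp_of_eq_linearMap_comp hsurj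
    (L := -Λ₀⁻¹ • Λ) (LinearMap.ext fun x => ?_)
  have := hΛ x
  simp only [smul_eq_mul] at this
  simp only [LinearMap.comp_apply, LinearMap.smul_apply, ContinuousLinearMap.coe_coe, smul_eq_mul]
  field_simp
  linarith

/-- Under a regular constraint the Lagrange multiplier is unique: if `y₀`
is a regular value of `g` and `x ∈ S = g⁻¹(y₀)` is a local extremum of `f|_S`, then there
is exactly one `L ∈ F*` with `f'(x) = L ∘ g'(x)`; moreover `L = f'(x) ∘ g'(x)⁺` for every
generalized inverse `g'(x)⁺`, so `f'(x) ∘ q₁ = f'(x) ∘ q₂` for any two generalized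
inverses. -/
theorem lagrange_multiplier_unique_regular
    {E F : Type*} [NormedAddCommGroup E] [NormedSpace ℝ E] [CompleteSpace E]
    [NormedAddCommGroup F] [NormedSpace ℝ F] [CompleteSpace F]
    {U : Set E} (hU : IsOpen U) {g : E → F} {f : E → ℝ} {y₀ : F}
    (hg : ContDiffOn ℝ 1 g U) (hf : ContDiffOn ℝ 1 f U)
    (hreg : ∀ z ∈ U, g z = y₀ →
      Function.Surjective (fderiv ℝ g z) ∧
      (LinearMap.ker (fderiv ℝ g z : E →ₗ[ℝ] F)).ClosedComplemented)
    {x : E} (hxU : x ∈ U) (hxS : g x = y₀)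
    (hext : IsLocalExtrOn f (U ∩ g ⁻¹' {y₀}) x) :
    (∃! L : F →L[ℝ] ℝ, fderiv ℝ f x = L ∘L fderiv ℝ g x) ∧
    (∀ q : F →L[ℝ] E,
      fderiv ℝ g x ∘L q ∘L fderiv ℝ g x = fderiv ℝ g x →
      q ∘L fderiv ℝ g x ∘L q = q →
      fderiv ℝ f x = (fderiv ℝ f x ∘L q) ∘L fderiv ℝ g x) ∧
    (∀ q₁ q₂ : F →L[ℝ] E,
      fderiv ℝ g x ∘L q₁ ∘L fderiv ℝ g x = fderiv ℝ g x →
      q₁ ∘L fderiv ℝ g x ∘L q₁ = q₁ →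
      fderiv ℝ g x ∘L q₂ ∘L fderiv ℝ g x = fderiv ℝ g x →
      q₂ ∘L fderiv ℝ g x ∘L q₂ = q₂ →
      fderiv ℝ f x ∘L q₁ = fderiv ℝ f x ∘L q₂) := by
  obtain ⟨hsurj, -⟩ := hreg x hxU hxS
  have hU' : U ∈ 𝓝 x := hU.mem_nhds hxU
  have hextS : IsLocalExtrOn f {z | g z = g x} x := by
    rw [hxS]
    exact hext.of_inter_mem_nhds hU'
  obtain ⟨L, hL⟩ := hextS.exists_eq_comp_of_hasStrictFDerivAt_of_surjective
    ((hg.contDiffAt hU').hasStrictFDerivAt one_ne_zero)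
    ((hf.contDiffAt hU').hasStrictFDerivAt one_ne_zero) hsurj
  have hqL : ∀ q : F →L[ℝ] E, fderiv ℝ g x ∘L q ∘L fderiv ℝ g x = fderiv ℝ g x →
      fderiv ℝ f x ∘L q = L := fun q hq =>
    ContinuousLinearMap.comp_eq_of_eq_comp_of_comp_comp_eq hsurj hL hq
  refine ⟨⟨L, hL, fun L' hL' => ContinuousLinearMap.cancel_right hsurj (hL'.symm.trans hL)⟩,
    fun q hq _ => ?_, fun q₁ q₂ hq₁ _ hq₂ _ => ?_⟩
  · rw [hqL q hq, ← hL]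
  · rw [hqL q₁ hq₁, hqL q₂ hq₂]
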